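/- arXiv:1810.06708 — 2 statements merged into one kernel-verified Lean document; each statement's English description precedes it below -/
import Mathlib

section
/- Let T(x,y) = (ay + b(x^q - x), x) with 0 < |a| < 1 and |b| = q. Then T maps R² into R², but T restricted to R² is not surjective onto R²; in particular (1,0) ∈ R² is not in T(R²). -/
open scoped Classical
open MeasureTheory Filter

noncomputable section

/-- A complete, locally compact non-Archimedean field with residue field of
order `q`, absolute value normalized so that a uniformizer has norm `1/q`.
`reps` is a set of `q` coset representatives for the residue field: they cover
the ring of integers by discs of radius `1/q` and are pairwise at distance
`> 1/q`. -/
structure NAField (K : Type*) [NormedField K] where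
  na : IsNonarchimedean (fun x : K => ‖x‖)
  complete : CompleteSpace K
  locCompact : LocallyCompactSpace K
  q : ℕ
  one_lt_q : 1 < q
  valGroup : ∀ x : K, x ≠ 0 → ∃ n : ℤ, ‖x‖ = (q : ℝ) ^ n
  exists_unif : ∃ ϖ : K, ‖ϖ‖ = (q : ℝ)⁻¹
  reps : Finset K
  card_reps : reps.card = q
  norm_reps : ∀ s ∈ reps, ‖s‖ ≤ 1
  reps_cover : ∀ x : K, ‖x‖ ≤ 1 → ∃ s ∈ reps, ‖x - s‖ ≤ (q : ℝ)⁻¹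
  reps_sep : ∀ s ∈ reps, ∀ t ∈ reps, s ≠ t → (q : ℝ)⁻¹ < ‖s - t‖

variable {K : Type*} [NormedField K]

/-- `f : R → R` is `(1/q)`-Lipschitz on the ring of integers. -/
def NAField.IsLip (F : NAField K) (f : K → K) : Prop :=
  (∀ t : K, ‖t‖ ≤ 1 → ‖f t‖ ≤ 1) ∧
  ∀ t₁ t₂ : K, ‖t₁‖ ≤ 1 → ‖t₂‖ ≤ 1 → ‖f t₁ - f t₂‖ ≤ ((F.q : ℝ))⁻¹ * ‖t₁ - t₂‖

/-- The unit polydisc `R² ⊆ K²`. -/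
def unitPoly (K : Type*) [NormedField K] : Set (K × K) := {p | ‖p.1‖ ≤ 1 ∧ ‖p.2‖ ≤ 1}

/-- Horizontal `δ`-neighborhood `H_δ(f) = {(t, f t + θ) : t ∈ R, |θ| ≤ δ}`. -/
def Hnbhd (f : K → K) (δ : ℝ) : Set (K × K) :=
  {p | ∃ t θ : K, ‖t‖ ≤ 1 ∧ ‖θ‖ ≤ δ ∧ p = (t, f t + θ)}

/-- Vertical `δ`-neighborhood `V_δ(f) = {(f t + θ, t) : t ∈ R, |θ| ≤ δ}`. -/
def Vnbhd (f : K → K) (δ : ℝ) : Set (K × K) :=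
  {p | ∃ t θ : K, ‖t‖ ≤ 1 ∧ ‖θ‖ ≤ δ ∧ p = (f t + θ, t)}

/-- The automorphism `T(x,y) = (a y + b (x^q - x), x)`. -/
def NAField.Tmap (F : NAField K) (a b : K) : K × K → K × K :=
  fun p => (a * p.2 + b * (p.1 ^ F.q - p.1), p.1)

/-- The inverse automorphism `T⁻¹(x,y) = (y, a⁻¹ (x - b (y^q - y)))`. -/
def NAField.Tinv (F : NAField K) (a b : K) : K × K → K × K :=
  fun p => (p.2, a⁻¹ * (p.1 - b * (p.2 ^ F.q - p.2)))

/-- The attractor `A_T = ⋂_{n ≥ 1} Tⁿ(R²)`. -/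
def NAField.Attractor (F : NAField K) (a b : K) : Set (K × K) :=
  ⋂ n ∈ {n : ℕ | 1 ≤ n}, (F.Tmap a b)^[n] '' unitPoly K

/-- The basin of attraction `B_T = ⋃_{n ≥ 1} T⁻ⁿ(R²)`. -/
def NAField.Basin (F : NAField K) (a b : K) : Set (K × K) :=
  ⋃ n ∈ {n : ℕ | 1 ≤ n}, (F.Tmap a b)^[n] ⁻¹' unitPoly K

/-- `T^k` for `k : ℤ`. -/
def NAField.iterZ (F : NAField K) (a b : K) (k : ℤ) : K × K → K × K :=
  if 0 ≤ k then (F.Tmap a b)^[k.toNat] else (F.Tinv a b)^[(-k).toNat]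

/-- The image under the conjugacy `ω` of the cylinder set of bisequences
agreeing with `s` on coordinates `-M, …, M`: points of the attractor whose
itinerary through the residue strips matches `s` on those coordinates. -/
def NAField.Cyl (F : NAField K) (a b : K) (s : ℤ → K) (M : ℕ) : Set (K × K) :=
  {p | p ∈ F.Attractor a b ∧
    ∀ k : ℤ, |k| ≤ (M : ℤ) → ‖(F.iterZ a b k p).1 - s k‖ ≤ ((F.q : ℝ))⁻¹}

/-!
On `R` the residue field is finite of order `q`, so `x^q ≡ x` modulo the maximal ideal; since the
value group is `q^ℤ`, this means `|x^q - x| ≤ 1/q`. Hence `|b (x^q - x)| ≤ 1` and `T(R²) ⊆ R²`.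
A preimage of `(1, 0)` would have `x = 0` and `a y = 1`, impossible when `|a| < 1` and `|y| ≤ 1`.
-/

open scoped NormedField Valued

namespace Valued.integer

variable [IsUltrametricDist K]

theorem mem_iff_norm_le_one {x : K} : x ∈ 𝒪[K] ↔ ‖x‖ ≤ 1 :=
  (Valuation.mem_integer_iff _ _).trans NNReal.coe_le_coe.symm

theorem mem_maximalIdeal_iff_norm_lt_one {u : 𝒪[K]} : u ∈ 𝓂[K] ↔ ‖(u : K)‖ < 1 := by
  have hunit : IsUnit u ↔ ‖(u : K)‖ = 1 := by
    simpa [← NNReal.coe_inj] using!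
      (Valuation.integer.integers (NormedField.valuation (K := K))).isUnit_iff_valuation_eq_one
  rw [IsLocalRing.mem_maximalIdeal, mem_nonunits_iff, hunit,
    (mem_iff_norm_le_one.mp u.2).lt_iff_ne]

theorem residue_eq_residue_iff_norm_sub_lt_one {u v : 𝒪[K]} :
    IsLocalRing.residue 𝒪[K] u = IsLocalRing.residue 𝒪[K] v ↔ ‖(u : K) - v‖ < 1 := by
  rw [← sub_eq_zero, ← map_sub, IsLocalRing.residue_eq_zero_iff,
    mem_maximalIdeal_iff_norm_lt_one, AddSubgroupClass.coe_sub]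

theorem norm_pow_natCard_residueField_sub_self_lt_one [Finite 𝓀[K]] {x : K} (hx : ‖x‖ ≤ 1) :
    ‖x ^ Nat.card 𝓀[K] - x‖ < 1 := by
  have := Fintype.ofFinite 𝓀[K]
  let y : 𝒪[K] := ⟨x, mem_iff_norm_le_one.mpr hx⟩
  have hy : y ^ Nat.card 𝓀[K] - y ∈ 𝓂[K] := by
    rw [← IsLocalRing.residue_eq_zero_iff, map_sub, map_pow, Nat.card_eq_fintype_card,
      FiniteField.pow_card, sub_self]
  simpa [y] using mem_maximalIdeal_iff_norm_lt_one.mp hy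

theorem natCard_residueField_eq_card {S : Finset K} (hS : ∀ s ∈ S, ‖s‖ ≤ 1)
    (hcover : ∀ x : K, ‖x‖ ≤ 1 → ∃ s ∈ S, ‖x - s‖ < 1)
    (hsep : ∀ s ∈ S, ∀ t ∈ S, s ≠ t → 1 ≤ ‖s - t‖) :
    Nat.card 𝓀[K] = S.card := by
  let f : S → 𝓀[K] := fun s => IsLocalRing.residue 𝒪[K] ⟨s, mem_iff_norm_le_one.mpr (hS s s.2)⟩
  have hf : Function.Bijective f := by
    refine ⟨fun s t hst => ?_, fun y => ?_⟩
    · by_contra hne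
      exact (hsep s s.2 t t.2 (Subtype.coe_ne_coe.mpr hne)).not_gt
        (residue_eq_residue_iff_norm_sub_lt_one.mp hst)
    · obtain ⟨x, rfl⟩ := IsLocalRing.residue_surjective y
      obtain ⟨s, hs, hxs⟩ := hcover x (mem_iff_norm_le_one.mp x.2)
      rw [norm_sub_rev] at hxs
      exact ⟨⟨s, hs⟩, residue_eq_residue_iff_norm_sub_lt_one.mpr hxs⟩
  rw [← Nat.card_eq_of_bijective f hf, Nat.card_eq_fintype_card, Fintype.card_coe]

end Valued.integer

namespace NAField

variable (F : NAField K)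

theorem inv_q_lt_one : (F.q : ℝ)⁻¹ < 1 :=
  inv_lt_one_of_one_lt₀ (by exact_mod_cast F.one_lt_q)

theorem norm_le_inv_q_of_norm_lt_one {x : K} (hx : ‖x‖ < 1) : ‖x‖ ≤ (F.q : ℝ)⁻¹ := by
  rcases eq_or_ne x 0 with rfl | hx0
  · simp
  obtain ⟨n, hn⟩ := F.valGroup x hx0
  have hq : (1 : ℝ) < F.q := by exact_mod_cast F.one_lt_q
  have hneg : n < 0 := by
    rwa [hn, ← zpow_zero (F.q : ℝ), zpow_lt_zpow_iff_right₀ hq] at hx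
  rw [hn, ← zpow_neg_one]
  exact zpow_le_zpow_right₀ hq.le (by omega)

theorem norm_pow_q_sub_self_le {x : K} (hx : ‖x‖ ≤ 1) : ‖x ^ F.q - x‖ ≤ (F.q : ℝ)⁻¹ := by
  have := IsUltrametricDist.isUltrametricDist_of_isNonarchimedean_norm F.na
  have hcard : Nat.card 𝓀[K] = F.q := by
    rw [← F.card_reps]
    refine Valued.integer.natCard_residueField_eq_card F.norm_reps (fun x hx => ?_)
      (fun s hs t ht hst => ?_)
    · obtain ⟨s, hs, hxs⟩ := F.reps_cover x hx
      exact ⟨s, hs, hxs.trans_lt F.inv_q_lt_one⟩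
    · exact not_lt.mp fun h => (F.reps_sep s hs t ht hst).not_ge (F.norm_le_inv_q_of_norm_lt_one h)
  have : Finite 𝓀[K] := Nat.finite_of_card_ne_zero (by have := F.one_lt_q; omega)
  exact F.norm_le_inv_q_of_norm_lt_one
    (hcard ▸ Valued.integer.norm_pow_natCard_residueField_sub_self_lt_one hx)

theorem mapsTo_Tmap_unitPoly {a b : K} (ha : ‖a‖ ≤ 1) (hb : ‖b‖ ≤ F.q) :
    Set.MapsTo (F.Tmap a b) (unitPoly K) (unitPoly K) := by
  rintro ⟨x, y⟩ ⟨hx, hy⟩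
  refine ⟨(F.na _ _).trans (max_le ?_ ?_), hx⟩
  · show ‖a * y‖ ≤ 1
    rw [norm_mul]
    exact mul_le_one₀ ha (norm_nonneg y) hy
  · have hq : (0 : ℝ) < F.q := by exact_mod_cast (Nat.zero_lt_one.trans F.one_lt_q)
    show ‖b * (x ^ F.q - x)‖ ≤ 1
    calc ‖b * (x ^ F.q - x)‖ = ‖b‖ * ‖x ^ F.q - x‖ := norm_mul _ _
      _ ≤ F.q * (F.q : ℝ)⁻¹ := mul_le_mul hb (F.norm_pow_q_sub_self_le hx) (norm_nonneg _) hq.le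
      _ = 1 := mul_inv_cancel₀ hq.ne'

theorem norm_le_of_mk_zero_mem_image_Tmap {a b u : K}
    (h : (u, 0) ∈ F.Tmap a b '' unitPoly K) : ‖u‖ ≤ ‖a‖ := by
  obtain ⟨⟨x, y⟩, ⟨-, hy⟩, he⟩ := h
  simp only [Tmap, Prod.mk.injEq] at he
  obtain ⟨rfl, rfl⟩ := he
  rw [zero_pow (by have := F.one_lt_q; omega), sub_zero, mul_zero, add_zero, norm_mul]
  exact mul_le_of_le_one_right (norm_nonneg a) hy

end NAField

theorem stmt6_general (F : NAField K) (a b : K) (ha : ‖a‖ < 1)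
    (hb : ‖b‖ = (F.q : ℝ)) :
    Set.MapsTo (F.Tmap a b) (unitPoly K) (unitPoly K) ∧
    ((1 : K), (0 : K)) ∉ F.Tmap a b '' unitPoly K :=
  ⟨F.mapsTo_Tmap_unitPoly ha.le hb.le,
    fun h => (F.norm_le_of_mk_zero_mem_image_Tmap h).not_gt (by rwa [norm_one])⟩

theorem stmt6 (F : NAField K) (a b : K) (ha0 : a ≠ 0) (ha : ‖a‖ < 1)
    (hb : ‖b‖ = (F.q : ℝ)) :
    Set.MapsTo (F.Tmap a b) (unitPoly K) (unitPoly K) ∧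
    ((1 : K), (0 : K)) ∉ F.Tmap a b '' unitPoly K :=
  stmt6_general F a b ha hb
end
end

section
/- For any (x,y) ∈ R², the characteristic polynomial p(λ) = λ² - b(q x^{q-1} - 1)λ - a of the Jacobian of T at (x,y) has two roots λ_min, λ_max ∈ K with |λ_min| = |a|/|b| < 1 and |λ_max| = |b| > 1. -/
open scoped Classical
open MeasureTheory Filter

noncomputable section

variable {K : Type*} [NormedField K]

/-!
The characteristic polynomial is `λ² - cλ - a` with `c = b (q x^{q-1} - 1)`, and `|c| = |b|`
because `|q| ≤ 1/q`: the additive group `R / πR` has `q` elements, so Lagrange's theorem puts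
`q • 1` in `πR`. As `|a| < |c|²`, the map `z ↦ (z² - a) / c` contracts the ball of radius
`|a| / |c|`; its fixed point is a root `λ` there. The other root `c - λ` has norm `|c|` by the
ultrametric inequality, and `λ (c - λ) = -a` then gives `|λ| = |a| / |c|`.
-/

open Metric

namespace IsUltrametricDist

variable {G : Type*} [SeminormedAddCommGroup G] [IsUltrametricDist G]

theorem norm_sub_eq_of_norm_lt {u v : G} (h : ‖u‖ < ‖v‖) : ‖u - v‖ = ‖v‖ := by
  rw [sub_eq_add_neg, norm_add_eq_max_of_norm_ne_norm (by simpa using h.ne), norm_neg,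
    max_eq_right (by simpa using h.le)]

theorem mem_closedBall_openAddSubgroup {ρ : ℝ} (hρ : 0 < ρ) (x : G) :
    x ∈ closedBall_openAddSubgroup G hρ ↔ ‖x‖ ≤ ρ :=
  mem_closedBall_zero_iff

theorem relIndex_closedBall_eq_card {r s : ℝ} (hr : 0 < r) (hs : 0 < s) {T : Finset G}
    (hT : ∀ t ∈ T, ‖t‖ ≤ s) (hcover : ∀ x : G, ‖x‖ ≤ s → ∃ t ∈ T, ‖x - t‖ ≤ r)
    (hsep : ∀ t ∈ T, ∀ u ∈ T, t ≠ u → r < ‖t - u‖) :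
    (closedBall_openAddSubgroup G hr).toAddSubgroup.relIndex
      (closedBall_openAddSubgroup G hs).toAddSubgroup = T.card := by
  set Bs := (closedBall_openAddSubgroup G hs).toAddSubgroup
  set H := (closedBall_openAddSubgroup G hr).toAddSubgroup.addSubgroupOf Bs
  have hmem : ∀ x y : Bs, (x : Bs ⧸ H) = y ↔ ‖(x : G) - y‖ ≤ r := by
    intro x y
    rw [QuotientAddGroup.eq, AddSubgroup.mem_addSubgroupOf, OpenAddSubgroup.mem_toAddSubgroup,
      mem_closedBall_openAddSubgroup, AddSubgroup.coe_add, AddSubgroup.coe_neg, neg_add_eq_sub,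
      ← norm_neg, neg_sub]
  let φ : T → Bs ⧸ H := fun t =>
    ((⟨t, (mem_closedBall_openAddSubgroup hs _).2 (hT t t.2)⟩ : Bs) : Bs ⧸ H)
  have hφ : Function.Bijective φ := by
    refine ⟨fun t u htu => Subtype.ext ?_, fun z => ?_⟩
    · by_contra hne
      exact (hsep t t.2 u u.2 hne).not_ge ((hmem _ _).1 htu)
    · induction z using QuotientAddGroup.induction_on with
      | H x =>
        obtain ⟨t, ht, hxt⟩ := hcover x ((mem_closedBall_openAddSubgroup hs x).1 x.2)
        exact ⟨⟨t, ht⟩, (hmem _ _).2 (by rwa [← norm_neg, neg_sub])⟩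
  rw [AddSubgroup.relIndex, AddSubgroup.index, ← Nat.card_eq_of_bijective φ hφ,
    Nat.card_eq_fintype_card, Fintype.card_coe]

theorem norm_card_nsmul_le {r s : ℝ} (hr : 0 < r) (hs : 0 < s) {T : Finset G}
    (hT : ∀ t ∈ T, ‖t‖ ≤ s) (hcover : ∀ x : G, ‖x‖ ≤ s → ∃ t ∈ T, ‖x - t‖ ≤ r)
    (hsep : ∀ t ∈ T, ∀ u ∈ T, t ≠ u → r < ‖t - u‖) {g : G} (hg : ‖g‖ ≤ s) :
    ‖T.card • g‖ ≤ r := by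
  have := (closedBall_openAddSubgroup G hr).toAddSubgroup.nsmul_relIndex_mem
    (K := (closedBall_openAddSubgroup G hs).toAddSubgroup)
    ((mem_closedBall_openAddSubgroup hs g).2 hg)
  rwa [relIndex_closedBall_eq_card hr hs hT hcover hsep, OpenAddSubgroup.mem_toAddSubgroup,
    mem_closedBall_openAddSubgroup] at this

end IsUltrametricDist

section Quadratic

variable [IsUltrametricDist K]

theorem lipschitzOnWith_sq_sub_div (a c : K) {r : ℝ} (hr : 0 ≤ r) :
    LipschitzOnWith ⟨r / ‖c‖, by positivity⟩ (fun z => (z ^ 2 - a) / c) (closedBall 0 r) := by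
  refine LipschitzOnWith.of_dist_le_mul fun z hz w hw => ?_
  rw [mem_closedBall_zero_iff] at hz hw
  have hzw : ‖z + w‖ ≤ r := (IsUltrametricDist.norm_add_le_max z w).trans (max_le hz hw)
  calc dist ((z ^ 2 - a) / c) ((w ^ 2 - a) / c) = ‖z + w‖ / ‖c‖ * dist z w := by
        rw [dist_eq_norm, dist_eq_norm, ← sub_div, norm_div, div_mul_eq_mul_div, ← norm_mul]
        ring_nf
    _ ≤ r / ‖c‖ * dist z w := by gcongr

theorem mapsTo_sq_sub_div {a c : K} (h : ‖a‖ ≤ ‖c‖ ^ 2) :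
    Set.MapsTo (fun z => (z ^ 2 - a) / c) (closedBall 0 (‖a‖ / ‖c‖))
      (closedBall 0 (‖a‖ / ‖c‖)) := by
  intro z hz
  rw [mem_closedBall_zero_iff] at hz ⊢
  have hz2 : ‖z ^ 2‖ ≤ ‖a‖ :=
    calc ‖z ^ 2‖ ≤ (‖a‖ / ‖c‖) ^ 2 := by rw [norm_pow]; gcongr
      _ = ‖a‖ * (‖a‖ / ‖c‖ ^ 2) := by ring
      _ ≤ ‖a‖ :=
        mul_le_of_le_one_right (norm_nonneg a) (div_le_one_of_le₀ h (by positivity))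
  rw [norm_div, sub_eq_add_neg]
  gcongr
  exact (IsUltrametricDist.norm_add_le_max _ _).trans (max_le hz2 (norm_neg a).le)

theorem exists_root_quadratic_norm_le [CompleteSpace K] {a c : K} (h : ‖a‖ < ‖c‖ ^ 2) :
    ∃ l : K, l ^ 2 - c * l - a = 0 ∧ ‖l‖ ≤ ‖a‖ / ‖c‖ := by
  have hc : 0 < ‖c‖ := by nlinarith [norm_nonneg a, norm_nonneg c]
  have hmaps := mapsTo_sq_sub_div h.le
  have hcontr :
      ContractingWith (⟨‖a‖ / ‖c‖ / ‖c‖, by positivity⟩ : NNReal) (hmaps.restrict _ _ _) := by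
    refine ⟨?_, (lipschitzOnWith_sq_sub_div a c (by positivity)).mapsToRestrict hmaps⟩
    change ‖a‖ / ‖c‖ / ‖c‖ < 1
    rw [div_div, ← sq]
    exact (div_lt_one (pow_pos hc 2)).2 h
  obtain ⟨l, hl, hfix, -⟩ := hcontr.exists_fixedPoint' isClosed_closedBall.isComplete hmaps
    (mem_closedBall_self (by positivity)) (edist_ne_top _ _)
  refine ⟨l, ?_, mem_closedBall_zero_iff.1 hl⟩
  have : (l ^ 2 - a) / c = l := hfix
  rw [div_eq_iff (norm_pos_iff.1 hc)] at this
  linear_combination this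

theorem exists_roots_quadratic_norm_eq [CompleteSpace K] {a c : K} (h : ‖a‖ < ‖c‖ ^ 2) :
    ∃ l m : K, l ^ 2 - c * l - a = 0 ∧ m ^ 2 - c * m - a = 0 ∧
      ‖l‖ = ‖a‖ / ‖c‖ ∧ ‖m‖ = ‖c‖ := by
  obtain ⟨l, hl, hle⟩ := exists_root_quadratic_norm_le h
  have hc : 0 < ‖c‖ := by nlinarith [norm_nonneg a, norm_nonneg c]
  have hlc : ‖l‖ < ‖c‖ := hle.trans_lt ((div_lt_iff₀ hc).2 (by rwa [← sq]))
  have hm : ‖l - c‖ = ‖c‖ := IsUltrametricDist.norm_sub_eq_of_norm_lt hlc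
  refine ⟨l, c - l, hl, by linear_combination hl, ?_, by rw [← norm_neg, neg_sub, hm]⟩
  rw [eq_div_iff hc.ne', ← hm, ← norm_mul]
  congr 1
  linear_combination hl

end Quadratic

namespace NAField

theorem isUltrametricDist (F : NAField K) : IsUltrametricDist K :=
  IsUltrametricDist.isUltrametricDist_of_isNonarchimedean_norm F.na

theorem norm_q_le (F : NAField K) : ‖(F.q : K)‖ ≤ (F.q : ℝ)⁻¹ := by
  have := F.isUltrametricDist
  have hq : (0 : ℝ) < F.q := Nat.cast_pos.2 (zero_lt_one.trans F.one_lt_q)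
  simpa [F.card_reps] using IsUltrametricDist.norm_card_nsmul_le (inv_pos.2 hq) one_pos
    F.norm_reps F.reps_cover F.reps_sep (norm_one (α := K)).le

theorem norm_q_mul_pow_sub_one (F : NAField K) {x : K} (hx : ‖x‖ ≤ 1) (n : ℕ) :
    ‖(F.q : K) * x ^ n - 1‖ = 1 := by
  have := F.isUltrametricDist
  have hq : (1 : ℝ) < F.q := by exact_mod_cast F.one_lt_q
  have hsmall : ‖(F.q : K) * x ^ n‖ < ‖(1 : K)‖ :=
    calc ‖(F.q : K) * x ^ n‖ ≤ (F.q : ℝ)⁻¹ * 1 := by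
          rw [norm_mul, norm_pow]
          gcongr
          exacts [F.norm_q_le, pow_le_one₀ (norm_nonneg x) hx]
      _ < ‖(1 : K)‖ := by rw [mul_one, norm_one]; exact inv_lt_one_of_one_lt₀ hq
  rw [IsUltrametricDist.norm_sub_eq_of_norm_lt hsmall, norm_one]

end NAField

theorem stmt7_general (F : NAField K) (a b : K) (ha : ‖a‖ < 1)
    (hb : ‖b‖ = (F.q : ℝ)) (x : K) (hx : ‖x‖ ≤ 1) :
    ∃ lmin lmax : K,
      lmin ^ 2 - b * ((F.q : K) * x ^ (F.q - 1) - 1) * lmin - a = 0 ∧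
      lmax ^ 2 - b * ((F.q : K) * x ^ (F.q - 1) - 1) * lmax - a = 0 ∧
      ‖lmin‖ = ‖a‖ / ‖b‖ ∧ ‖lmax‖ = ‖b‖ ∧ ‖lmin‖ < 1 ∧ 1 < ‖lmax‖ := by
  have := F.isUltrametricDist
  have := F.complete
  have hb1 : 1 < ‖b‖ := by rw [hb]; exact_mod_cast F.one_lt_q
  have hc : ‖b * ((F.q : K) * x ^ (F.q - 1) - 1)‖ = ‖b‖ := by
    rw [norm_mul, F.norm_q_mul_pow_sub_one hx, mul_one]
  obtain ⟨lmin, lmax, hmin, hmax, hnmin, hnmax⟩ :=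
    exists_roots_quadratic_norm_eq (a := a) (by rw [hc]; nlinarith [norm_nonneg a])
  rw [hc] at hnmin hnmax
  refine ⟨lmin, lmax, hmin, hmax, hnmin, hnmax, ?_, hnmax ▸ hb1⟩
  rw [hnmin, div_lt_one (by linarith)]
  linarith

theorem stmt7 (F : NAField K) (a b : K) (ha0 : a ≠ 0) (ha : ‖a‖ < 1)
    (hb : ‖b‖ = (F.q : ℝ)) (x y : K) (hx : ‖x‖ ≤ 1) (hy : ‖y‖ ≤ 1) :
    ∃ lmin lmax : K,
      lmin ^ 2 - b * ((F.q : K) * x ^ (F.q - 1) - 1) * lmin - a = 0 ∧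
      lmax ^ 2 - b * ((F.q : K) * x ^ (F.q - 1) - 1) * lmax - a = 0 ∧
      ‖lmin‖ = ‖a‖ / ‖b‖ ∧ ‖lmax‖ = ‖b‖ ∧ ‖lmin‖ < 1 ∧ 1 < ‖lmax‖ :=
  stmt7_general F a b ha hb x hx
end
end
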